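/- arXiv:2112.10304 — 2 statements merged into one kernel-verified Lean document; each statement's English description precedes it below -/
import Mathlib

section
/- For two rules f and g (possibly with different numbers of players), Sol_f P = Sol_g P for all nonempty positions P if and only if ord_f P = ord_g P for all nonempty positions P. -/
/-- A position: a nonincreasing list of positive naturals (trailing zeros removed). -/
def IsPos (P : List ℕ) : Prop := P.Pairwise (· ≥ ·) ∧ ∀ a ∈ P, 0 < a

/-- The result of chomping position `P`, keeping the first `x` entries and
truncating all later entries to at most `a` (then removing zeros). -/
def chompAt (P : List ℕ) (x a : ℕ) : List ℕ :=
  (P.take x ++ (P.drop x).map (fun b => min b a)).filter (fun b => 0 < b)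

/-- A chomp move from `P` to `Q`. -/
def ChompMove (P Q : List ℕ) : Prop :=
  ∃ x a : ℕ, x < P.length ∧ Q = chompAt P x a ∧ Q ≠ P

/-- `ord` is an ordinal assignment for the `n`-player rule `α` (with scores
`α 1, ..., α n`): `ord [] = 0`, ordinals of nonempty positions lie in `[1, n]`,
and `α (ord P)` is the maximum of `α (ord Q + 1)` over moves `P → Q` with `ord Q ≠ n`. -/
structure IsOrd (n : ℕ) (α : ℕ → ℝ) (ord : List ℕ → ℕ) : Prop where
  ord_empty : ord [] = 0
  ord_mem : ∀ P, IsPos P → P ≠ [] → 1 ≤ ord P ∧ ord P ≤ n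
  exists_best : ∀ P, IsPos P → P ≠ [] →
    ∃ Q, ChompMove P Q ∧ ord Q ≠ n ∧ ord P = ord Q + 1
  le_best : ∀ P, IsPos P → P ≠ [] → ∀ Q, ChompMove P Q → ord Q ≠ n →
    α (ord Q + 1) ≤ α (ord P)

open Classical in
/-- The set of solution moves from `P`: optimal moves, with the player's
preference that a move to `[]` must be taken whenever it attains the maximum. -/
noncomputable def SolSet (n : ℕ) (α : ℕ → ℝ) (ord : List ℕ → ℕ) (P : List ℕ) :
    Set (List ℕ) :=
  if (∀ R, ChompMove P R → ord R ≠ n → α (ord R + 1) ≤ α 1) then {([] : List ℕ)}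
  else {Q | ChompMove P Q ∧ ord Q ≠ n ∧
    ∀ R, ChompMove P R → ord R ≠ n → α (ord R + 1) ≤ α (ord Q + 1)}

/-! Since `α` is injective on the ordinals, the optimal moves from a nonempty position `P` are
exactly the moves `P → Q` with `ord P = ord Q + 1`; the preference for `[]` only matters when
`ord P = 1`, and then `[]` is already the only such move. So the solution sets are determined by
the ordinals. Conversely, a solution move `P → Q` common to both rules gives
`ord P = ord Q + 1` for both, and induction on the number of squares finishes. -/

lemma List.sum_filter_pos (l : List ℕ) : (l.filter (0 < ·)).sum = l.sum := by
  induction l with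
  | nil => rfl
  | cons a t ih => rcases Nat.eq_zero_or_pos a with rfl | ha <;> simp [*]

lemma chompAt_sum (P : List ℕ) (x a : ℕ) :
    (chompAt P x a).sum = (P.take x).sum + ((P.drop x).map (min · a)).sum := by
  rw [chompAt, List.sum_filter_pos, List.sum_append]

lemma chompMove_isPos {P Q : List ℕ} (hP : IsPos P) (h : ChompMove P Q) : IsPos Q := by
  obtain ⟨x, a, -, rfl, -⟩ := h
  obtain ⟨hhead, htail, hsplit⟩ :=
    List.pairwise_append.mp ((P.take_append_drop x).symm ▸ hP.1 :)
  refine ⟨List.Pairwise.sublist List.filter_sublist ?_,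
    fun b hb => by simpa using (List.mem_filter.mp hb).2⟩
  refine List.pairwise_append.mpr ⟨hhead, htail.map _ fun _ _ h => min_le_min h le_rfl, ?_⟩
  simp only [List.mem_map]
  rintro b hb _ ⟨c, hc, rfl⟩
  exact (min_le_left _ _).trans (hsplit b hb c hc)

/-- A move that truncates no entry would leave the position unchanged. -/
lemma chompMove_sum_lt {P Q : List ℕ} (hP : IsPos P) (h : ChompMove P Q) : Q.sum < P.sum := by
  obtain ⟨x, a, -, rfl, hne⟩ := h
  have htrunc : ∃ b ∈ P.drop x, min b a < id b := by
    by_contra! hall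
    refine hne ?_
    have hmap : (P.drop x).map (min · a) = P.drop x :=
      List.map_congr_left (fun b hb => le_antisymm (min_le_left _ _) (hall b hb)) |>.trans
        (List.map_id _)
    rw [chompAt, hmap, List.take_append_drop]
    exact List.filter_eq_self.mpr fun b hb => by simpa using hP.2 b hb
  have hlt := List.sum_lt_sum (min · a) id (fun b _ => min_le_left b a) htrunc
  rw [List.map_id] at hlt
  rw [chompAt_sum, ← P.take_append_drop x, List.sum_append, List.take_append_drop]
  omega

lemma chompMove_nil {P : List ℕ} (hne : P ≠ []) : ChompMove P [] :=
  ⟨0, 0, List.length_pos_iff.mpr hne, by simp [chompAt], hne.symm⟩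

theorem IsPos.chompMove_induction {motive : List ℕ → Prop}
    (step : ∀ P, IsPos P → (∀ Q, ChompMove P Q → motive Q) → motive P) :
    ∀ P, IsPos P → motive P := by
  intro P
  induction P using (measure List.sum).wf.induction with
  | h P ih =>
    exact fun hP => step P hP fun Q hQ =>
      ih Q (chompMove_sum_lt hP hQ) (chompMove_isPos hP hQ)

namespace IsOrd

variable {n : ℕ} {α : ℕ → ℝ} {ord : List ℕ → ℕ}

lemma ord_eq_zero_iff (h : IsOrd n α ord) {P : List ℕ} (hP : IsPos P) :
    ord P = 0 ↔ P = [] := by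
  refine ⟨fun h0 => ?_, fun hnil => hnil ▸ h.ord_empty⟩
  by_contra hne
  have := (h.ord_mem P hP hne).1
  omega

lemma ord_eq_of_forall_ne_nil {m : ℕ} {β : ℕ → ℝ} {ord' : List ℕ → ℕ}
    (h : IsOrd n α ord) (h' : IsOrd m β ord')
    (heq : ∀ P, IsPos P → P ≠ [] → ord P = ord' P) {P : List ℕ} (hP : IsPos P) :
    ord P = ord' P := by
  rcases eq_or_ne P [] with rfl | hne
  · rw [h.ord_empty, h'.ord_empty]
  · exact heq P hP hne

lemma ord_le (h : IsOrd n α ord) {P : List ℕ} (hP : IsPos P) : ord P ≤ n := by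
  rcases eq_or_ne P [] with rfl | hne
  · simp [h.ord_empty]
  · exact (h.ord_mem P hP hne).2

lemma forall_le_iff (h : IsOrd n α ord) {P : List ℕ} (hP : IsPos P) (hne : P ≠ []) (c : ℝ) :
    (∀ R, ChompMove P R → ord R ≠ n → α (ord R + 1) ≤ c) ↔ α (ord P) ≤ c := by
  refine ⟨fun hc => ?_, fun hc R hR hRn => (h.le_best P hP hne R hR hRn).trans hc⟩
  obtain ⟨Q, hQ, hQn, hPQ⟩ := h.exists_best P hP hne
  exact hPQ ▸ hc Q hQ hQn

lemma le_apply_iff (h : IsOrd n α ord) (hα : Set.InjOn α (Set.Icc 1 n)) {P : List ℕ}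
    (hP : IsPos P) (hne : P ≠ []) {R : List ℕ} (hR : ChompMove P R) (hRn : ord R ≠ n) :
    α (ord P) ≤ α (ord R + 1) ↔ ord P = ord R + 1 := by
  refine ⟨fun hle => hα (h.ord_mem P hP hne) ?_
    (le_antisymm hle (h.le_best P hP hne R hR hRn)), fun hPR => hPR ▸ le_rfl⟩
  have := h.ord_le (chompMove_isPos hP hR)
  exact ⟨by omega, by omega⟩

theorem solSet_eq (h : IsOrd n α ord) (hα : Set.InjOn α (Set.Icc 1 n)) {P : List ℕ}
    (hP : IsPos P) (hne : P ≠ []) :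
    SolSet n α ord P = {Q | ChompMove P Q ∧ ord P = ord Q + 1} := by
  have hPn := h.ord_mem P hP hne
  have hnil_le_iff : α (ord P) ≤ α 1 ↔ ord P = 1 := by
    simpa [h.ord_empty] using
      h.le_apply_iff hα hP hne (chompMove_nil hne) (by rw [h.ord_empty]; omega)
  rw [SolSet, h.forall_le_iff hP hne, hnil_le_iff]
  split_ifs with hP1
  · ext Q
    refine ⟨fun hQ => ?_, fun ⟨hQ, hPQ⟩ => ?_⟩
    · rw [Set.mem_singleton_iff.mp hQ]
      exact ⟨chompMove_nil hne, by rw [h.ord_empty, hP1]⟩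
    · exact (h.ord_eq_zero_iff (chompMove_isPos hP hQ)).mp (by omega)
  · refine Set.ext fun Q => and_congr_right fun hQ => ?_
    rw [h.forall_le_iff hP hne]
    exact ⟨fun ⟨hQn, hle⟩ => (h.le_apply_iff hα hP hne hQ hQn).mp hle,
      fun hPQ => ⟨by omega, hPQ ▸ le_rfl⟩⟩

end IsOrd

theorem sol_eq_iff_ord_eq_general (n m : ℕ) (α β : ℕ → ℝ)
    (hα : Set.InjOn α (Set.Icc 1 n)) (hβ : Set.InjOn β (Set.Icc 1 m))
    (ordf ordg : List ℕ → ℕ) (hf : IsOrd n α ordf) (hg : IsOrd m β ordg) :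
    (∀ P, IsPos P → P ≠ [] → SolSet n α ordf P = SolSet m β ordg P) ↔
      (∀ P, IsPos P → P ≠ [] → ordf P = ordg P) := by
  constructor
  · intro hsol
    have hord : ∀ P, IsPos P → ordf P = ordg P := by
      refine IsPos.chompMove_induction fun P hP ih => ?_
      rcases eq_or_ne P [] with rfl | hne
      · rw [hf.ord_empty, hg.ord_empty]
      obtain ⟨Q, hQ, -, hPQ⟩ := hf.exists_best P hP hne
      have hQg : Q ∈ SolSet m β ordg P := by
        rw [← hsol P hP hne, hf.solSet_eq hα hP hne]
        exact ⟨hQ, hPQ⟩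
      rw [hg.solSet_eq hβ hP hne] at hQg
      rw [hPQ, hQg.2, ih Q hQ]
    exact fun P hP _ => hord P hP
  · intro hord P hP hne
    rw [hf.solSet_eq hα hP hne, hg.solSet_eq hβ hP hne, hord P hP hne]
    refine Set.ext fun Q => and_congr_right fun hQ => ?_
    rw [hf.ord_eq_of_forall_ne_nil hg hord (chompMove_isPos hP hQ)]

/-- two rules have the same solution sets on all nonempty
positions iff they have the same ordinals on all nonempty positions. -/
theorem sol_eq_iff_ord_eq (n m : ℕ) (hn : 2 ≤ n) (hm : 2 ≤ m) (α β : ℕ → ℝ)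
    (hα : Set.InjOn α (Set.Icc 1 n)) (hβ : Set.InjOn β (Set.Icc 1 m))
    (ordf ordg : List ℕ → ℕ) (hf : IsOrd n α ordf) (hg : IsOrd m β ordg) :
    (∀ P, IsPos P → P ≠ [] → SolSet n α ordf P = SolSet m β ordg P) ↔
      (∀ P, IsPos P → P ≠ [] → ordf P = ordg P) :=
  sol_eq_iff_ord_eq_general n m α β hα hβ ordf ordg hf hg
end

section
/- If f = (α_1,...,α_n) and g = (β_1,...,β_n) are n-player rules such that (α_i − α_j)(β_i − β_j) > 0 for all i ≠ j, then f and g are isomorphic: ord_f P = ord_g P for every nonempty position P. -/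
/-! The proof is by strong induction on the number of squares of the position. A move removes
at least one square, so the induction hypothesis says that `ordf` and `ordg` agree on every
option of `P`. Then the option realizing `ordf P` under `α` is admissible for `β`,
giving `β (ordf P) ≤ β (ordg P)`, and symmetrically `α (ordg P) ≤ α (ordf P)`; if
`ordf P ≠ ordg P` these two inequalities contradict that `α` and `β` order `ordf P` and `ordg P` alike. -/

lemma IsPos.filter_pos_eq {P : List ℕ} (hP : IsPos P) : P.filter (fun b => 0 < b) = P :=
  List.filter_eq_self.mpr fun b hb => by simpa using hP.2 b hb

lemma isPos_chompAt {P : List ℕ} (hP : IsPos P) (x a : ℕ) : IsPos (chompAt P x a) := by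
  obtain ⟨hsorted, -⟩ := hP
  rw [← List.take_append_drop x P, List.pairwise_append] at hsorted
  obtain ⟨htake, hdrop, hcross⟩ := hsorted
  refine ⟨List.Pairwise.sublist List.filter_sublist ?_,
    fun b hb => by simpa using (List.mem_filter.mp hb).2⟩
  refine List.pairwise_append.mpr ⟨htake, ?_, ?_⟩
  · exact List.pairwise_map.mpr (hdrop.imp fun h => min_le_min h le_rfl)
  · simp only [List.mem_map]
    rintro b hb _ ⟨c, hc, rfl⟩
    exact (min_le_left c a).trans (hcross b hb c hc)

lemma chompAt_eq_self {P : List ℕ} (hP : IsPos P) {x a : ℕ} (h : ∀ b ∈ P.drop x, b ≤ a) :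
    chompAt P x a = P := by
  have hmap : (P.drop x).map (fun b => min b a) = P.drop x :=
    List.map_congr_left (fun b hb => min_eq_left (h b hb)) |>.trans (List.map_id _)
  rw [chompAt, hmap, List.take_append_drop, hP.filter_pos_eq]

lemma sum_chompAt_lt {P : List ℕ} {x a : ℕ} (h : ∃ b ∈ P.drop x, a < b) :
    (chompAt P x a).sum < P.sum := by
  obtain ⟨b, hb, hab⟩ := h
  have hdrop : ((P.drop x).map (fun b => min b a)).sum < ((P.drop x).map id).sum :=
    List.sum_lt_sum _ _ (fun c _ => min_le_left c a) ⟨b, hb, by simpa using hab⟩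
  calc (chompAt P x a).sum
      ≤ (P.take x ++ (P.drop x).map (fun b => min b a)).sum :=
        List.filter_sublist.sum_le_sum fun _ _ => Nat.zero_le _
    _ < (P.take x ++ P.drop x).sum := by
        simp only [List.sum_append, List.map_id] at hdrop ⊢
        omega
    _ = P.sum := by rw [List.take_append_drop]

namespace ChompMove

variable {P Q : List ℕ}

lemma isPos (hP : IsPos P) (h : ChompMove P Q) : IsPos Q := by
  obtain ⟨x, a, -, rfl, -⟩ := h
  exact isPos_chompAt hP x a

lemma sum_lt (hP : IsPos P) (h : ChompMove P Q) : Q.sum < P.sum := by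
  obtain ⟨x, a, -, rfl, hne⟩ := h
  by_cases hle : ∀ b ∈ P.drop x, b ≤ a
  · exact absurd (chompAt_eq_self hP hle) hne
  · exact sum_chompAt_lt (by simpa only [not_forall, not_le, exists_prop] using hle)

end ChompMove

lemma IsOrd.eq_of_forall_chompMove_eq {n : ℕ} {α β : ℕ → ℝ}
    (hcomp : ∀ i ∈ Set.Icc 1 n, ∀ j ∈ Set.Icc 1 n, i ≠ j →
      0 < (α i - α j) * (β i - β j))
    {ordf ordg : List ℕ → ℕ} (hf : IsOrd n α ordf) (hg : IsOrd n β ordg)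
    {P : List ℕ} (hP : IsPos P) (hne : P ≠ [])
    (hmoves : ∀ Q, ChompMove P Q → ordf Q = ordg Q) : ordf P = ordg P := by
  obtain ⟨Qf, hQf, hQfn, hordf⟩ := hf.exists_best P hP hne
  obtain ⟨Qg, hQg, hQgn, hordg⟩ := hg.exists_best P hP hne
  have hβ : β (ordf P) ≤ β (ordg P) := by
    have := hg.le_best P hP hne Qf hQf (hmoves Qf hQf ▸ hQfn)
    rwa [← hmoves Qf hQf, ← hordf] at this
  have hα : α (ordg P) ≤ α (ordf P) := by
    have := hf.le_best P hP hne Qg hQg ((hmoves Qg hQg).symm ▸ hQgn)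
    rwa [hmoves Qg hQg, ← hordg] at this
  by_contra hfg
  exact (hcomp _ (hf.ord_mem P hP hne) _ (hg.ord_mem P hP hne) hfg).not_ge
    (mul_nonpos_of_nonneg_of_nonpos (sub_nonneg.2 hα) (sub_nonpos.2 hβ))

theorem ord_eq_of_same_order_general (n : ℕ) (α β : ℕ → ℝ)
    (hcomp : ∀ i ∈ Set.Icc 1 n, ∀ j ∈ Set.Icc 1 n, i ≠ j →
      0 < (α i - α j) * (β i - β j))
    (ordf ordg : List ℕ → ℕ) (hf : IsOrd n α ordf) (hg : IsOrd n β ordg) :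
    ∀ P, IsPos P → P ≠ [] → ordf P = ordg P := by
  intro P
  induction hs : P.sum using Nat.strong_induction_on generalizing P with
  | _ s ih =>
    intro hP hne
    refine hf.eq_of_forall_chompMove_eq hcomp hg hP hne fun Q hQ => ?_
    rcases eq_or_ne Q [] with rfl | hQne
    · rw [hf.ord_empty, hg.ord_empty]
    · exact ih _ (hs ▸ hQ.sum_lt hP) Q rfl (hQ.isPos hP) hQne

/-- order-isomorphic rules (same relative order of the scores)
induce the same ordinal on every nonempty position. -/
theorem ord_eq_of_same_order (n : ℕ) (hn : 2 ≤ n) (α β : ℕ → ℝ)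
    (hcomp : ∀ i ∈ Set.Icc 1 n, ∀ j ∈ Set.Icc 1 n, i ≠ j →
      0 < (α i - α j) * (β i - β j))
    (ordf ordg : List ℕ → ℕ) (hf : IsOrd n α ordf) (hg : IsOrd n β ordg) :
    ∀ P, IsPos P → P ≠ [] → ordf P = ordg P :=
  ord_eq_of_same_order_general n α β hcomp ordf ordg hf hg
end
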